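/- For the path graph P_n (n ≥ 2) and any k ≥ 3, any two proper k-colourings of P_n differ by a sequence of at most O(n²) single-vertex recolourings; in fact one can explicitly connect any two proper 3-colourings of P_n by at most n² single-vertex recolouring steps. -/

import Mathlib

/-- `c` is a proper `k`-colouring of `G`. -/
def IsProperColoring {V : Type} (G : SimpleGraph V) {k : ℕ} (c : V → Fin k) : Prop :=
  ∀ ⦃u v : V⦄, G.Adj u v → c u ≠ c v

/-- A single-vertex recolouring step between proper `k`-colourings. -/
def RecolStep {V : Type} (G : SimpleGraph V) {k : ℕ} (c c' : V → Fin k) : Prop :=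
  IsProperColoring G c ∧ IsProperColoring G c' ∧
    ∃ v : V, c v ≠ c' v ∧ ∀ w : V, w ≠ v → c w = c' w

/-- `G` is `k`-mixing: any two proper `k`-colourings are connected by
single-vertex recolourings. -/
def IsMixing {V : Type} (G : SimpleGraph V) (k : ℕ) : Prop :=
  ∀ c c' : V → Fin k, IsProperColoring G c → IsProperColoring G c' →
    Relation.ReflTransGen (RecolStep G) c c'
/-- `ReachN R n a b`: `b` is reachable from `a` in exactly `n` `R`-steps. -/
def ReachN {α : Type*} (R : α → α → Prop) : ℕ → α → α → Prop
  | 0, a, b => a = b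
  | n + 1, a, c => ∃ b, R a b ∧ ReachN R n b c

/-!
Fix the vertices of the path from the last one down to the first. To give vertex `j` a colour
`a` that differs from the colour of `j + 1`, first give `j - 1` (recursively, by the same
procedure) a third colour, different from `a` and from the current colour of `j`, and then
recolour `j`. This cascade takes at most `j + 1` steps and only touches vertices `≤ j`, so the
vertices already fixed stay fixed, and fixing all `n` vertices takes at most `n²` steps. The
hypothesis `k ≥ 3` is exactly what provides the third colour.
-/

open SimpleGraph

namespace ReachN

variable {α : Type*} {R : α → α → Prop}

lemma single {a b : α} (h : R a b) : ReachN R 1 a b := ⟨b, h, rfl⟩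

lemma trans : ∀ {m m' : ℕ} {a b c : α},
    ReachN R m a b → ReachN R m' b c → ReachN R (m + m') a c
  | 0, _, _, _, _, rfl, h => by simpa using h
  | _ + 1, _, _, _, _, ⟨d, hd, hdb⟩, h => by
    rw [Nat.add_right_comm]
    exact ⟨d, hd, trans hdb h⟩

end ReachN

section Recolouring

variable {V : Type} {G : SimpleGraph V} {k : ℕ}

lemma ReachN.isProperColoring :
    ∀ {m : ℕ} {c c' : V → Fin k}, ReachN (RecolStep G) m c c' →
      IsProperColoring G c → IsProperColoring G c'
  | 0, _, _, rfl, hc => hc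
  | _ + 1, _, _, ⟨_, hstep, h⟩, _ => ReachN.isProperColoring h hstep.2.1

variable [DecidableEq V] {c : V → Fin k} {v : V} {a : Fin k}

lemma IsProperColoring.update (hc : IsProperColoring G c) (ha : ∀ w, G.Adj v w → a ≠ c w) :
    IsProperColoring G (Function.update c v a) := by
  intro u w huw
  rcases eq_or_ne u v with rfl | hu
  · rw [Function.update_self, Function.update_of_ne huw.ne']
    exact ha w huw
  · rw [Function.update_of_ne hu]
    rcases eq_or_ne w v with rfl | hw
    · rw [Function.update_self]
      exact (ha u huw.symm).symm
    · rw [Function.update_of_ne hw]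
      exact hc huw

lemma exists_reachN_le_one_update (hc : IsProperColoring G c)
    (ha : ∀ w, G.Adj v w → a ≠ c w) :
    ∃ m ≤ 1, ReachN (RecolStep G) m c (Function.update c v a) := by
  by_cases hcv : c v = a
  · exact ⟨0, zero_le_one, by rw [← hcv, Function.update_eq_self]; rfl⟩
  refine ⟨1, le_rfl, ReachN.single ⟨hc, hc.update ha, v, ?_, fun w hw => ?_⟩⟩
  · rwa [Function.update_self]
  · rw [Function.update_of_ne hw]

end Recolouring

section PathGraph

variable {n k : ℕ}

lemma exists_reachN_recolour_vertex (hk : 3 ≤ k) (j : ℕ) (hj : j < n) (c : Fin n → Fin k)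
    (hc : IsProperColoring (pathGraph n) c) (a : Fin k)
    (ha : ∀ w : Fin n, j + 1 = w.val → a ≠ c w) :
    ∃ m ≤ j + 1, ∃ c₂, ReachN (RecolStep (pathGraph n)) m c c₂ ∧
      c₂ ⟨j, hj⟩ = a ∧ ∀ w : Fin n, j < w.val → c₂ w = c w := by
  induction j using Nat.strong_induction_on generalizing c a with
  | _ j ih =>
    obtain ⟨m₁, hm₁, c₁, hr₁, hc₁_above, hc₁_below⟩ : ∃ m ≤ j, ∃ c₁,
        ReachN (RecolStep (pathGraph n)) m c c₁ ∧ (∀ w : Fin n, j ≤ w.val → c₁ w = c w) ∧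
        ∀ w : Fin n, w.val + 1 = j → a ≠ c₁ w := by
      cases j with
      | zero => exact ⟨0, le_rfl, c, rfl, fun _ _ => rfl, fun _ hw => by omega⟩
      | succ i =>
        obtain ⟨b, hba, hbj⟩ := Fin.exists_ne_and_ne_of_two_lt a (c ⟨i + 1, hj⟩) hk
        obtain ⟨m, hm, c₁, hr, hc₁i, hc₁⟩ := ih i (by omega) (by omega) c hc b fun w hw => by
          rwa [show w = ⟨i + 1, hj⟩ from Fin.ext hw.symm]
        refine ⟨m, hm, c₁, hr, fun w hw => hc₁ w (by omega), fun w hw => ?_⟩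
        rw [show w = ⟨i, by omega⟩ from Fin.ext (by simp only; omega), hc₁i]
        exact hba.symm
    have hneighbours : ∀ w, (pathGraph n).Adj ⟨j, hj⟩ w → a ≠ c₁ w := by
      intro w hw
      rcases pathGraph_adj.mp hw with hw | hw
      · rw [hc₁_above w (by simp only at hw; omega)]
        exact ha w hw
      · exact hc₁_below w hw
    obtain ⟨m₂, hm₂, hr₂⟩ := exists_reachN_le_one_update (hr₁.isProperColoring hc) hneighbours
    refine ⟨m₁ + m₂, by omega, _, hr₁.trans hr₂, Function.update_self .., fun w hw => ?_⟩
    rw [Function.update_of_ne (by rintro rfl; simp at hw), hc₁_above w hw.le]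

lemma exists_reachN_le_sq_of_agree_from (hk : 3 ≤ k) {c' : Fin n → Fin k}
    (hc' : IsProperColoring (pathGraph n) c') (i : ℕ) (hi : i ≤ n) (c : Fin n → Fin k)
    (hc : IsProperColoring (pathGraph n) c) (hagree : ∀ w : Fin n, i ≤ w.val → c w = c' w) :
    ∃ m ≤ i ^ 2, ReachN (RecolStep (pathGraph n)) m c c' := by
  induction i generalizing c with
  | zero => exact ⟨0, le_rfl, funext fun w => hagree w w.val.zero_le⟩
  | succ i ih =>
    have hupper : ∀ w : Fin n, i + 1 = w.val → c' ⟨i, hi⟩ ≠ c w := fun w hw => by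
      rw [hagree w hw.le]
      exact hc' (pathGraph_adj.mpr (Or.inl hw))
    obtain ⟨m₁, hm₁, c₂, hr₁, hc₂i, hc₂⟩ :=
      exists_reachN_recolour_vertex hk i hi c hc _ hupper
    obtain ⟨m₂, hm₂, hr₂⟩ := ih (by omega) c₂ (hr₁.isProperColoring hc) fun w hw => by
      rcases hw.eq_or_lt with hw | hw
      · rwa [show w = ⟨i, hi⟩ from Fin.ext hw.symm]
      · rw [hc₂ w hw, hagree w hw]
    exact ⟨m₁ + m₂, by nlinarith, hr₁.trans hr₂⟩

lemma exists_reachN_le_sq (hk : 3 ≤ k) {c c' : Fin n → Fin k}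
    (hc : IsProperColoring (pathGraph n) c) (hc' : IsProperColoring (pathGraph n) c') :
    ∃ m ≤ n ^ 2, ReachN (RecolStep (pathGraph n)) m c c' :=
  exists_reachN_le_sq_of_agree_from hk hc' n le_rfl c hc fun w hw => absurd w.isLt (by omega)

end PathGraph

/-- On a path `Pₙ` (`n ≥ 2`), any two proper `k`-colourings (`k ≥ 3`) are connected by
`O(n²)` single-vertex recolourings; for `k = 3` at most `n²` steps suffice. -/
theorem pathGraph_recolouring_diameter :
    (∀ k : ℕ, 3 ≤ k → ∃ C : ℕ, ∀ n : ℕ, 2 ≤ n → ∀ c c' : Fin n → Fin k,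
      IsProperColoring (SimpleGraph.pathGraph n) c →
      IsProperColoring (SimpleGraph.pathGraph n) c' →
      ∃ m ≤ C * n ^ 2, ReachN (RecolStep (SimpleGraph.pathGraph n)) m c c') ∧
    (∀ n : ℕ, 2 ≤ n → ∀ c c' : Fin n → Fin 3,
      IsProperColoring (SimpleGraph.pathGraph n) c →
      IsProperColoring (SimpleGraph.pathGraph n) c' →
      ∃ m ≤ n ^ 2, ReachN (RecolStep (SimpleGraph.pathGraph n)) m c c') :=
  ⟨fun _ hk => ⟨1, fun _ _ _ _ hc hc' => by simpa using exists_reachN_le_sq hk hc hc'⟩,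
    fun _ _ _ _ hc hc' => exists_reachN_le_sq le_rfl hc hc'⟩
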